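/- arXiv:1808.00124 — 2 statements merged into one kernel-verified Lean document; each statement's English description precedes it below -/
import Mathlib

section
/- Let K = Q(√−3). The triple (16, 111, 117) satisfies Π_K(16)·Π_K(111) = Π_K(117), and there exists an ideal of O_K with norm strictly between 111 and 117 (so this solution is non-trivial). -/
/-!
Since `((α - 1) / 2) ^ 2 + (α - 1) / 2 + 1 = 0`, the quadratic field `K` is the third cyclotomic
field, so `𝓞 K = ℤ[η]` with `η ^ 2 + η + 1 = 0` is a principal ideal domain and
`N(a + bη) = a² - ab + b²`. Counting generators of principal ideals, `a_K(n) · #(𝓞 K)ˣ` is the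
number `r(n)` of representations of `n` by this form; `n = 1` gives `#(𝓞 K)ˣ = r(1) = 6`.
For `n ≤ 117` all representations lie in `[-12, 12]²`, so the identity and `a_K(112) = 2` become
finite computations.
-/

open NumberField Ideal Finset Nat

/-- Number of nonzero ideals of the ring of integers of `K` with absolute norm `n`. -/
noncomputable def aK (K : Type*) [Field K] [NumberField K] (n : ℕ) : ℕ :=
  Nat.card {I : Ideal (𝓞 K) // I ≠ ⊥ ∧ Ideal.absNorm I = n}

/-- Generalized factorial `Π_K(x) = ∏_{n ≤ x} n ^ (a_K n)`. -/
noncomputable def PiK (K : Type*) [Field K] [NumberField K] (x : ℕ) : ℕ :=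
  ∏ n ∈ Finset.Icc 1 x, n ^ aK K n

open Submodule.IsPrincipal in
theorem Ideal.natCard_nonzero_generators_eq {R : Type*} [CommRing R] [IsDomain R]
    [IsPrincipalIdealRing R] (P : Ideal R → Prop) :
    Nat.card {x : R // x ≠ 0 ∧ P (span {x})} =
      Nat.card {I : Ideal R // I ≠ ⊥ ∧ P I} * Nat.card Rˣ := by
  have generator_ne_zero {I : Ideal R} (hI : I ≠ ⊥) : generator I ≠ 0 :=
    mt (eq_bot_iff_generator_eq_zero I).2 hI
  let f : {I : Ideal R // I ≠ ⊥ ∧ P I} × Rˣ → {x : R // x ≠ 0 ∧ P (span {x})} :=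
    fun ⟨⟨I, hI, hPI⟩, u⟩ => ⟨generator I * u, mul_ne_zero (generator_ne_zero hI) u.ne_zero,
      by rwa [span_singleton_mul_right_unit u.isUnit, span_singleton_generator]⟩
  have hf_inj : Function.Injective f := by
    intro ⟨⟨I, hI, _⟩, u⟩ ⟨⟨J, _, _⟩, v⟩ h
    have hgen : generator I * u = generator J * v := congrArg Subtype.val h
    obtain rfl : I = J := by
      simpa only [span_singleton_mul_right_unit u.isUnit, span_singleton_mul_right_unit v.isUnit,
        span_singleton_generator] using congrArg (fun x => span {x}) hgen
    rw [Units.ext (mul_left_cancel₀ (generator_ne_zero hI) hgen)]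
  have hf_surj : Function.Surjective f := by
    rintro ⟨x, hx, hPx⟩
    obtain ⟨u, hu⟩ := span_singleton_eq_span_singleton.1 (span_singleton_generator (span {x}))
    exact ⟨⟨⟨span {x}, mt span_singleton_eq_bot.1 hx, hPx⟩, u⟩, Subtype.ext hu⟩
  rw [← Nat.card_prod, Nat.card_congr (Equiv.ofBijective f ⟨hf_inj, hf_surj⟩)]

def normForm (p : ℤ × ℤ) : ℤ := p.1 ^ 2 - p.1 * p.2 + p.2 ^ 2

theorem normForm_nonneg (p : ℤ × ℤ) : 0 ≤ normForm p := by
  unfold normForm; nlinarith [sq_nonneg (2 * p.1 - p.2), sq_nonneg p.2]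

section EisensteinBasis

variable {R : Type*} [CommRing R] {η : R} (B : Module.Basis (Fin 2) ℤ R)
  (hB0 : B 0 = 1) (hB1 : B 1 = η)
include hB0 hB1

theorem Module.Basis.equivFun_intCast_add_intCast_mul (a b : ℤ) :
    B.equivFun (a + b * η) = ![a, b] := by
  rw [← LinearEquiv.eq_symm_apply, B.equivFun_symm_apply, Fin.sum_univ_two, hB0, hB1]
  simp [zsmul_eq_mul]

theorem Algebra.norm_intCast_add_intCast_mul (hη : η ^ 2 + η + 1 = 0) (p : ℤ × ℤ) :
    Algebra.norm ℤ (p.1 + p.2 * η) = normForm p := by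
  have hmul_eta : (p.1 + p.2 * η) * η = ((-p.2 : ℤ) : R) + ((p.1 - p.2 : ℤ) : R) * η := by
    push_cast; linear_combination p.2 * hη
  rw [Algebra.norm_eq_matrix_det B, Matrix.det_fin_two]
  simp only [Algebra.leftMulMatrix_eq_repr_mul, hB0, hB1, mul_one, hmul_eta, ← B.equivFun_apply,
    B.equivFun_intCast_add_intCast_mul hB0 hB1, Matrix.cons_val_zero, Matrix.cons_val_one]
  rw [normForm]; ring

theorem natCard_absNorm_span_eq_natCard_normForm [IsDedekindDomain R] [Module.Free ℤ R]
    [Module.Finite ℤ R] (hη : η ^ 2 + η + 1 = 0) {n : ℕ} (hn : n ≠ 0) :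
    Nat.card {x : R // x ≠ 0 ∧ absNorm (span {x}) = n} =
      Nat.card {p : ℤ × ℤ // normForm p = n} := by
  let e : ℤ × ℤ ≃ R := (finTwoArrowEquiv ℤ).symm.trans B.equivFun.symm.toEquiv
  have he (p : ℤ × ℤ) : e p = p.1 + p.2 * η := by
    simp [e, Fin.sum_univ_two, hB0, hB1]
  refine (Nat.card_congr (e.subtypeEquiv fun p => ?_)).symm
  have hnorm := absNorm_span_singleton (e p)
  rw [he, Algebra.norm_intCast_add_intCast_mul B hB0 hB1 hη] at hnorm
  have hnonneg := normForm_nonneg p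
  rw [he, hnorm]
  refine ⟨fun h => ⟨fun h0 => ?_, by omega⟩, fun h => by omega⟩
  rw [h0, span_singleton_eq_bot.2 rfl, absNorm_bot] at hnorm
  omega

end EisensteinBasis

-- The box contains every solution of `normForm p = n ≤ 117`, as `3 a² ≤ 4 (a² - ab + b²)`.
noncomputable def reprCount (n : ℕ) : ℕ :=
  #{p ∈ Icc (-12 : ℤ) 12 ×ˢ Icc (-12 : ℤ) 12 | normForm p = n}

theorem natCard_normForm_eq_reprCount {n : ℕ} (hn : n ≤ 117) :
    Nat.card {p : ℤ × ℤ // normForm p = n} = reprCount n := by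
  refine Nat.subtype_card _ fun p => ?_
  simp only [mem_filter, mem_product, mem_Icc, and_iff_right_iff_imp]
  intro h
  have hn' : (n : ℤ) ≤ 117 := by exact_mod_cast hn
  unfold normForm at h
  refine ⟨⟨?_, ?_⟩, ?_, ?_⟩ <;>
    nlinarith [sq_nonneg (p.1 - 2 * p.2), sq_nonneg (2 * p.1 - p.2)]

theorem reprCount_one : reprCount 1 = 6 := by decide +kernel

theorem reprCount_112 : reprCount 112 = 12 := by decide +kernel

theorem prod_pow_reprCount_div_six :
    (∏ n ∈ Icc 1 16, n ^ (reprCount n / 6)) * ∏ n ∈ Icc 1 111, n ^ (reprCount n / 6) =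
      ∏ n ∈ Icc 1 117, n ^ (reprCount n / 6) := by
  decide +kernel

open Polynomial in
theorem isCyclotomicExtension_three_of_sq_eq_neg_three {K : Type*} [Field K] [NumberField K]
    (hdeg : Module.finrank ℚ K = 2) {α : K} (hα : α ^ 2 = -3) :
    IsCyclotomicExtension {3} ℚ K := by
  set ζ : K := (α - 1) / 2
  have hζ : IsPrimitiveRoot ζ 3 := by
    rw [← isRoot_cyclotomic_iff, cyclotomic_three]
    simp only [IsRoot, eval_add, eval_pow, eval_X, eval_one, ζ]
    linear_combination hα / 4
  have := hζ.adjoin_isCyclotomicExtension ℚ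
  have hadjoin : Algebra.adjoin ℚ {ζ} = ⊤ := by
    refine Algebra.toSubmodule_eq_top.1 (Submodule.eq_top_of_finrank_eq ?_)
    rw [Subalgebra.finrank_toSubmodule, hdeg,
      IsCyclotomicExtension.finrank (n := 3) _ (cyclotomic.irreducible_rat (by norm_num))]
    decide
  exact IsCyclotomicExtension.equiv _ _ _
    ((Subalgebra.equivOfEq _ _ hadjoin).trans Subalgebra.topEquiv)

theorem exists_basis_one_eta (K : Type*) [Field K] [NumberField K]
    [IsCyclotomicExtension {3} ℚ K] :
    ∃ (η : 𝓞 K) (B : Module.Basis (Fin 2) ℤ (𝓞 K)), B 0 = 1 ∧ B 1 = η ∧ η ^ 2 + η + 1 = 0 := by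
  have hζ := IsCyclotomicExtension.zeta_spec 3 ℚ K
  have hdim : hζ.integralPowerBasis.dim = 2 := by
    rw [hζ.integralPowerBasis_dim]; decide
  refine ⟨hζ.toInteger, hζ.integralPowerBasis.basis.reindex (finCongr hdim), ?_, ?_,
    IsCyclotomicExtension.Rat.Three.eta_sq_add_eta_add_one hζ⟩ <;> simp

theorem aK_one (K : Type*) [Field K] [NumberField K] : aK K 1 = 1 := by
  rw [aK, Nat.card_eq_one_iff_exists]
  exact ⟨⟨⊤, top_ne_bot, absNorm_top⟩, fun ⟨_, _, hI⟩ => Subtype.ext (absNorm_eq_one_iff.1 hI)⟩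

theorem aK_mul_natCard_units (K : Type*) [Field K] [NumberField K]
    [IsCyclotomicExtension {3} ℚ K] {n : ℕ} (hn0 : n ≠ 0) (hn : n ≤ 117) :
    aK K n * Nat.card (𝓞 K)ˣ = reprCount n := by
  have := IsCyclotomicExtension.Rat.three_pid K
  obtain ⟨η, B, hB0, hB1, hη⟩ := exists_basis_one_eta K
  rw [aK, ← natCard_nonzero_generators_eq,
    natCard_absNorm_span_eq_natCard_normForm B hB0 hB1 hη hn0, natCard_normForm_eq_reprCount hn]

/-- For `K = ℚ(√-3)`, the triple `(16,111,117)` is a non-trivial solution: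
`Π_K(16)Π_K(111) = Π_K(117)` and some ideal has norm strictly between `111` and `117`. -/
theorem stmt6 (K : Type*) [Field K] [NumberField K]
    (hdeg : Module.finrank ℚ K = 2) (α : K) (hα : α ^ 2 = -3) :
    PiK K 16 * PiK K 111 = PiK K 117 ∧
    ∃ I : Ideal (𝓞 K), I ≠ ⊥ ∧ 111 < Ideal.absNorm I ∧ Ideal.absNorm I < 117 := by
  have := isCyclotomicExtension_three_of_sq_eq_neg_three hdeg hα
  have hunits : Nat.card (𝓞 K)ˣ = 6 := by
    simpa [aK_one, reprCount_one] using aK_mul_natCard_units K one_ne_zero (by norm_num)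
  have haK {n : ℕ} (hn0 : n ≠ 0) (hn : n ≤ 117) : aK K n = reprCount n / 6 := by
    rw [← aK_mul_natCard_units K hn0 hn, hunits, Nat.mul_div_cancel _ (by norm_num)]
  have hPiK {x : ℕ} (hx : x ≤ 117) : PiK K x = ∏ n ∈ Icc 1 x, n ^ (reprCount n / 6) :=
    prod_congr rfl fun n hn => by
      obtain ⟨hn1, hnx⟩ := mem_Icc.1 hn
      rw [haK (by omega) (by omega)]
  constructor
  · rw [hPiK (by norm_num), hPiK (by norm_num), hPiK le_rfl, prod_pow_reprCount_div_six]
  · have h112 : aK K 112 ≠ 0 := by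
      rw [haK (by norm_num) (by norm_num), reprCount_112]; norm_num
    obtain ⟨⟨I, hI, hnorm⟩⟩ := (Nat.card_ne_zero.1 h112).1
    exact ⟨I, hI, by omega, by omega⟩
end

section
/- Let K be a number field and m ≥ 3. Suppose 2 ≤ l₁ ≤ ... ≤ l_{m−1} < l_m. Then (l₁, ..., l_m) is a trivial solution of Π_K(l₁)···Π_K(l_{m−1}) = Π_K(l_m) if and only if Π_K(l₁)···Π_K(l_{m−2}) = l_m^{a_K(l_m)}. More precisely: (1) if (l₁,...,l_m) is a trivial solution then Π_K(l₁)···Π_K(l_{m−2}) = l_m^{a_K(l_m)}; (2) conversely, if Π_K(l₁)···Π_K(l_{m−2}) = l_m^{a_K(l_m)} with a_K(l_m) ≥ 1, then setting l_{m−1} = max{N𝔞 : 𝔞 ideal, l_{m−2} ≤ N𝔞 < l_m} yields a trivial solution (l₁,...,l_{m−1},l_m). -/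
/-!
If no nonzero ideal has norm strictly between `a < b`, then `a_K` vanishes on `(a, b)`, so
`Π_K(b) = Π_K(a) · b ^ a_K(b)`. For a trivial solution this lets one cancel `Π_K(l_{m-1})` from both
sides of the equation; conversely, the largest ideal norm in `[l_{m-2}, l_m)` leaves no ideal norm
between it and `l_m`, and the same identity turns the hypothesis into a solution.
-/

open NumberField Ideal Finset Nat

section

variable (K : Type*) [Field K] [NumberField K]

lemma PiK_pos (x : ℕ) : 0 < PiK K x :=
  prod_pos fun _ hn => pow_pos (mem_Icc.mp hn).1 _

lemma aK_eq_zero_of_not_exists {n : ℕ} (h : ¬ ∃ I : Ideal (𝓞 K), I ≠ ⊥ ∧ absNorm I = n) :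
    aK K n = 0 :=
  Nat.card_eq_zero.mpr (Or.inl ⟨fun ⟨I, hI⟩ => h ⟨I, hI⟩⟩)

lemma PiK_eq_mul_pow_of_aK_eq_zero {a b : ℕ} (hab : a < b)
    (h : ∀ n, a < n → n < b → aK K n = 0) :
    PiK K b = PiK K a * b ^ aK K b := by
  have hgap : ∏ n ∈ Ioo a b, n ^ aK K n = 1 :=
    prod_eq_one fun n hn => by rw [h n (mem_Ioo.mp hn).1 (mem_Ioo.mp hn).2, pow_zero]
  have hIcc (x : ℕ) : Icc 1 x = Ioc 0 x := Icc_add_one_left_eq_Ioc 0 x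
  rw [PiK, PiK, hIcc, hIcc, ← prod_Ioc_consecutive _ (Nat.zero_le a) hab.le,
    ← Ioo_insert_right hab, prod_insert (by simp), hgap, mul_one]

lemma PiK_eq_mul_pow_of_not_exists_absNorm_mem_Ioo {a b : ℕ} (hab : a < b)
    (h : ¬ ∃ I : Ideal (𝓞 K), I ≠ ⊥ ∧ a < absNorm I ∧ absNorm I < b) :
    PiK K b = PiK K a * b ^ aK K b :=
  PiK_eq_mul_pow_of_aK_eq_zero K hab fun _ han hnb =>
    aK_eq_zero_of_not_exists K fun ⟨I, hI, hIn⟩ => h ⟨I, hI, hIn ▸ han, hIn ▸ hnb⟩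

end

-- `l 0, …, l (m-1)` stand for `l₁, …, l_m`; in (2), `lm1` is the new `l_{m-1}`, put in slot `m - 2`.
/-- Lemma 2.1: with `l 0, …, l (m-1)` playing the role of `l₁, …, l_m`:
(1) a trivial solution satisfies `Π_K(l₁)⋯Π_K(l_{m-2}) = l_m ^ (a_K l_m)`;
(2) conversely such an equation (with `a_K l_m ≥ 1`) yields a trivial solution upon setting
`l_{m-1} = max {N𝔞 : l_{m-2} ≤ N𝔞 < l_m}`. -/
theorem stmt7 (K : Type*) [Field K] [NumberField K] (m : ℕ) (hm : 3 ≤ m) :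
    (∀ l : ℕ → ℕ, 2 ≤ l 0 → (∀ i j, i ≤ j → j ≤ m - 1 → l i ≤ l j) → l (m - 2) < l (m - 1) →
      (∏ i ∈ Finset.range (m - 1), PiK K (l i)) = PiK K (l (m - 1)) →
      (¬ ∃ I : Ideal (𝓞 K), I ≠ ⊥ ∧ l (m - 2) < Ideal.absNorm I ∧ Ideal.absNorm I < l (m - 1)) →
      (∏ i ∈ Finset.range (m - 2), PiK K (l i)) = l (m - 1) ^ aK K (l (m - 1)))
    ∧
    (∀ l : ℕ → ℕ, 2 ≤ l 0 → (∀ i j, i ≤ j → j ≤ m - 3 → l i ≤ l j) → l (m - 3) < l (m - 1) →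
      (∏ i ∈ Finset.range (m - 2), PiK K (l i)) = l (m - 1) ^ aK K (l (m - 1)) →
      1 ≤ aK K (l (m - 1)) →
      ∀ lm1 : ℕ,
        ((∃ I : Ideal (𝓞 K), I ≠ ⊥ ∧ Ideal.absNorm I = lm1) ∧ l (m - 3) ≤ lm1 ∧ lm1 < l (m - 1)) →
        (∀ t : ℕ, ((∃ I : Ideal (𝓞 K), I ≠ ⊥ ∧ Ideal.absNorm I = t) ∧
            l (m - 3) ≤ t ∧ t < l (m - 1)) → t ≤ lm1) →
        ((∏ i ∈ Finset.range (m - 1), PiK K (Function.update l (m - 2) lm1 i)) =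
            PiK K (Function.update l (m - 2) lm1 (m - 1)) ∧
          ¬ ∃ I : Ideal (𝓞 K), I ≠ ⊥ ∧ lm1 < Ideal.absNorm I ∧ Ideal.absNorm I < l (m - 1))) := by
  have hm1 : m - 1 = m - 2 + 1 := by omega
  refine ⟨fun l _ _ hlt hprod hgap => ?_, fun l _ _ _ hprod _ lm1 ⟨_, _, hlt⟩ hmax => ?_⟩
  · rw [hm1, prod_range_succ, ← hm1, PiK_eq_mul_pow_of_not_exists_absNorm_mem_Ioo K hlt hgap,
      mul_comm] at hprod
    exact mul_left_cancel₀ (PiK_pos K _).ne' hprod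
  · have hgap : ¬ ∃ I : Ideal (𝓞 K), I ≠ ⊥ ∧ lm1 < absNorm I ∧ absNorm I < l (m - 1) :=
      fun ⟨I, hI, hlow, hhigh⟩ => (hmax _ ⟨⟨I, hI, rfl⟩, by omega, hhigh⟩).not_gt hlow
    have hfix : ∀ i ∈ range (m - 2), PiK K (Function.update l (m - 2) lm1 i) = PiK K (l i) :=
      fun i hi => by rw [Function.update_of_ne (mem_range.mp hi).ne]
    refine ⟨?_, hgap⟩
    rw [hm1, prod_range_succ, prod_congr rfl hfix, Function.update_self,
      Function.update_of_ne (by omega), ← hm1, hprod,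
      PiK_eq_mul_pow_of_not_exists_absNorm_mem_Ioo K hlt hgap, mul_comm]
end
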